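/- arXiv:2602.21594 — 4 statements merged into one kernel-verified Lean document; each statement's English description precedes it below -/
import Mathlib

section
/- Along solutions of Ẋ = (1-Y)X, Ẏ = (X-Y)Y, the function V(X,Y) = Ψ(X) + Ψ(Y) + Ψ(1/X) + Ψ(Y/X) has derivative V̇ = -(X-1)²/X - (Y-1)², i.e., for all X, Y > 0, ∂V/∂X·(1-Y)X + ∂V/∂Y·(X-Y)Y = -(X-1)²/X - (Y-1)². -/
noncomputable def Ψ (S : ℝ) : ℝ := S - 1 - Real.log S

noncomputable def V (X Y : ℝ) : ℝ := Ψ X + Ψ Y + Ψ (1 / X) + Ψ (Y / X)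

theorem hasDerivAt_Ψ {x : ℝ} (hx : x ≠ 0) : HasDerivAt Ψ (1 - x⁻¹) x :=
  ((hasDerivAt_id x).sub_const 1).sub (Real.hasDerivAt_log hx)

theorem HasDerivAt.Ψ {u : ℝ → ℝ} {u' x : ℝ} (hu : HasDerivAt u u' x) (hx : u x ≠ 0) :
    HasDerivAt (fun t => Ψ (u t)) ((1 - (u x)⁻¹) * u') x :=
  (hasDerivAt_Ψ hx).comp x hu

theorem hasDerivAt_V_fst {X Y : ℝ} (hX : X ≠ 0) (hY : Y ≠ 0) :
    HasDerivAt (fun x => V x Y) ((X ^ 2 + X - 1 - Y) / X ^ 2) X := by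
  have hinv : HasDerivAt (fun x : ℝ => 1 / x) (-(X ^ 2)⁻¹) X := by
    simpa only [one_div] using hasDerivAt_inv hX
  have hdiv : HasDerivAt (fun x : ℝ => Y / x) (Y * -(X ^ 2)⁻¹) X := by
    simpa only [div_eq_mul_inv] using (hasDerivAt_inv hX).const_mul Y
  have h := ((((hasDerivAt_Ψ hX).add_const (Ψ Y)).add
    (hinv.Ψ (one_div_ne_zero hX))).add (hdiv.Ψ (div_ne_zero hY hX)))
  refine h.congr_deriv ?_
  field_simp
  ring

theorem hasDerivAt_V_snd {X Y : ℝ} (hX : X ≠ 0) (hY : Y ≠ 0) :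
    HasDerivAt (fun y => V X y) (1 + 1 / X - 2 / Y) Y := by
  have hdiv : HasDerivAt (fun y : ℝ => y / X) (1 / X) Y := (hasDerivAt_id Y).div_const X
  have h := ((((hasDerivAt_Ψ hY).const_add (Ψ X)).add_const (Ψ (1 / X))).add
    (hdiv.Ψ (div_ne_zero hY hX)))
  refine h.congr_deriv ?_
  field_simp
  ring

theorem V_strict_derivative (X Y : ℝ) (hX : 0 < X) (hY : 0 < Y) :
    deriv (fun x => Ψ x + Ψ Y + Ψ (1 / x) + Ψ (Y / x)) X * ((1 - Y) * X)
      + deriv (fun y => Ψ X + Ψ y + Ψ (1 / X) + Ψ (y / X)) Y * ((X - Y) * Y)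
      = -(X - 1) ^ 2 / X - (Y - 1) ^ 2 := by
  change deriv (fun x => V x Y) X * _ + deriv (fun y => V X y) Y * _ = _
  rw [(hasDerivAt_V_fst hX.ne' hY.ne').deriv, (hasDerivAt_V_snd hX.ne' hY.ne').deriv]
  field_simp
  ring
end

section
/- For ε ∈ (0,1), along solutions of Ẋ = -(1+ε)(Y-1)X, Ẏ = [X-1-ε(Y-1)]Y, the function V₁(X,Y) = Ψ(X) + (1+ε)Ψ(Y) has derivative V̇₁ = -(1+ε)ε(Y-1)², i.e., for all X, Y > 0, (1-1/X)·(-(1+ε)(Y-1)X) + (1+ε)(1-1/Y)·(X-1-ε(Y-1))Y = -(1+ε)ε(Y-1)². -/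
theorem V1_derivative_both_general (ε X Y : ℝ)
    (hX : 0 < X) (hY : 0 < Y) :
    (1 - 1 / X) * (-(1 + ε) * (Y - 1) * X)
      + (1 + ε) * (1 - 1 / Y) * ((X - 1 - ε * (Y - 1)) * Y)
      = -(1 + ε) * ε * (Y - 1) ^ 2 := by
  -- `Ψ'(S) * S = S - 1` clears both denominators; the rest is a polynomial identity.
  have hΨX : (1 - 1 / X) * X = X - 1 := by field_simp
  have hΨY : (1 - 1 / Y) * Y = Y - 1 := by field_simp
  linear_combination (-(1 + ε) * (Y - 1)) * hΨX + ((1 + ε) * (X - 1 - ε * (Y - 1))) * hΨY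

theorem V1_derivative_both (ε X Y : ℝ) (hε : ε ∈ Set.Ioo (0:ℝ) 1)
    (hX : 0 < X) (hY : 0 < Y) :
    (1 - 1 / X) * (-(1 + ε) * (Y - 1) * X)
      + (1 + ε) * (1 - 1 / Y) * ((X - 1 - ε * (Y - 1)) * Y)
      = -(1 + ε) * ε * (Y - 1) ^ 2 :=
  V1_derivative_both_general ε X Y hX hY
end

section
/- Along solutions of Ẋ = (1-Y)X, Ẏ = X - Y² (the predator-prey system Ẋ = (1-Y)X, Ẏ = (X-U)Y with forwarding feedback U = X + Y - X/Y), the function V(X,Y) = X/Y - 1 - ln X + Y - 1 satisfies V̇ = -½[(X/Y - 1)² + (Y-1)² + (X/Y - Y)²]. -/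
/-!
Write `a = X / Y`. Along the flow, `∂V/∂X · Ẋ = (1/Y - 1/X)(1 - Y)X = -(a - 1)(Y - 1)` and
`∂V/∂Y · Ẏ = (1 - X/Y²)(X - Y²) = -(a - Y)²`. Since `a - Y = (a - 1) - (Y - 1)`, the sum
`-(a - 1)(Y - 1) - (a - Y)²` is the negative half-sum of the three squares.
-/

open Real

lemma hasDerivAt_div_sub_log {c x : ℝ} (hx : x ≠ 0) :
    HasDerivAt (fun x => x / c - 1 - log x + c - 1) (1 / c - 1 / x) x := by
  have h := ((((hasDerivAt_id x).div_const c).sub_const 1).sub (hasDerivAt_log hx)).add_const c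
  simpa [one_div] using h.sub_const 1

lemma hasDerivAt_const_div_add {c y : ℝ} (hy : y ≠ 0) :
    HasDerivAt (fun y => c / y - 1 - log c + y - 1) (-c / y ^ 2 + 1) y := by
  have hinv : HasDerivAt (fun y => c / y) (-c / y ^ 2) y := by
    simpa [div_eq_mul_inv, neg_div] using (hasDerivAt_inv hy).const_mul c
  simpa using (((hinv.sub_const 1).sub_const (log c)).add (hasDerivAt_id y)).sub_const 1

lemma forwarding_lyapunov_identity {X Y : ℝ} (hX : X ≠ 0) (hY : Y ≠ 0) :
    (1 / Y - 1 / X) * ((1 - Y) * X) + (-X / Y ^ 2 + 1) * (X - Y ^ 2)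
      = -(1 / 2) * ((X / Y - 1) ^ 2 + (Y - 1) ^ 2 + (X / Y - Y) ^ 2) := by
  field_simp
  ring

theorem V_forwarding_derivative (X Y : ℝ) (hX : 0 < X) (hY : 0 < Y) :
    deriv (fun x => x / Y - 1 - Real.log x + Y - 1) X * ((1 - Y) * X)
      + deriv (fun y => X / y - 1 - Real.log X + y - 1) Y * (X - Y ^ 2)
      = -(1 / 2) * ((X / Y - 1) ^ 2 + (Y - 1) ^ 2 + (X / Y - Y) ^ 2) := by
  rw [(hasDerivAt_div_sub_log hX.ne').deriv, (hasDerivAt_const_div_add hY.ne').deriv]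
  exact forwarding_lyapunov_identity hX.ne' hY.ne'
end

section
/- Along solutions of Ẋ = (1-Y)X, Ẏ = (X-U)Y with U = Y + (Y-X)/Y, the function V(X,Y) = Ψ(1/X) + Ψ(Y/X) satisfies V̇ = -(X-1)²/X - (Y-X)²/(XY), which is negative for all (X,Y) ≠ (1,1) with X, Y > 0. -/
/-!
Both partial derivatives of `V` follow from `Ψ' S = 1 - 1/S` and the chain rule:
`∂V/∂X = (2X - 1 - Y)/X²` and `∂V/∂Y = (Y - X)/(XY)`. The control `U` is chosen so that the
cross terms cancel, leaving `V̇ = -(X-1)²/X - (Y-X)²/(XY)`, a sum of two nonpositive terms that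
vanish simultaneously only when `X = 1` and `Y = X`.
-/

lemma hasDerivAt_Ψ_s17 {S : ℝ} (hS : S ≠ 0) : HasDerivAt Ψ (1 - S⁻¹) S :=
  ((hasDerivAt_id S).sub_const 1).fun_sub (Real.hasDerivAt_log hS)

lemma hasDerivAt_Ψ_const_div {c x : ℝ} (hc : c ≠ 0) (hx : x ≠ 0) :
    HasDerivAt (fun x => Ψ (c / x)) ((x - c) / x ^ 2) x := by
  have hinner : HasDerivAt (fun x => c / x) (-c / x ^ 2) x := by
    simpa [div_eq_mul_inv, neg_div] using (hasDerivAt_inv hx).const_mul c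
  refine ((hasDerivAt_Ψ_s17 (div_ne_zero hc hx)).comp x hinner).congr_deriv ?_
  field_simp
  ring

lemma hasDerivAt_Ψ_div_const {a y : ℝ} (ha : a ≠ 0) (hy : y ≠ 0) :
    HasDerivAt (fun y => Ψ (y / a)) ((y - a) / (a * y)) y := by
  refine ((hasDerivAt_Ψ_s17 (div_ne_zero hy ha)).comp y
    ((hasDerivAt_id y).div_const a)).congr_deriv ?_
  field_simp

lemma sq_div_add_sq_div_mul_pos {X Y : ℝ} (hX : 0 < X) (hY : 0 < Y) (h : X ≠ 1 ∨ Y ≠ X) :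
    0 < (X - 1) ^ 2 / X + (Y - X) ^ 2 / (X * Y) := by
  rcases h with h | h
  · have : 0 < (X - 1) ^ 2 / X := by
      have := sub_ne_zero.mpr h
      positivity
    positivity
  · have : 0 < (Y - X) ^ 2 / (X * Y) := by
      have := sub_ne_zero.mpr h
      positivity
    positivity

theorem V_backstepping_derivative (X Y : ℝ) (hX : 0 < X) (hY : 0 < Y) :
    (deriv (fun x => Ψ (1 / x) + Ψ (Y / x)) X * ((1 - Y) * X)
      + deriv (fun y => Ψ (1 / X) + Ψ (y / X)) Y
          * ((X - (Y + (Y - X) / Y)) * Y)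
      = -(X - 1) ^ 2 / X - (Y - X) ^ 2 / (X * Y))
    ∧ ((X, Y) ≠ (1, 1) → -(X - 1) ^ 2 / X - (Y - X) ^ 2 / (X * Y) < 0) := by
  refine ⟨?_, fun hne => ?_⟩
  · have hVX := (hasDerivAt_Ψ_const_div one_ne_zero hX.ne').fun_add
      (hasDerivAt_Ψ_const_div hY.ne' hX.ne')
    have hVY := (hasDerivAt_Ψ_div_const hX.ne' hY.ne').const_add (Ψ (1 / X))
    rw [hVX.deriv, hVY.deriv]
    field_simp
    ring
  · have hoff : X ≠ 1 ∨ Y ≠ X := by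
      by_contra! h
      exact hne (by rw [h.2, h.1])
    have := sq_div_add_sq_div_mul_pos hX hY hoff
    rw [neg_div]
    linarith
end
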